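/- The set of commutators {XY - YX : X, Y ∈ UT_n} is exactly the set UT_n^{(0)} of strictly upper triangular matrices. -/

import Mathlib

/-!
The diagonal of a product of upper triangular matrices is the product of the diagonals, so a
commutator of upper triangular matrices has zero diagonal (the ring being commutative).

Conversely, let `N` be the shift with ones on the superdiagonal. Then
`(N * Y - Y * N) a b = Y (a + 1) b - Y a (b - 1)`, so `N * Y - Y * N = M` is a recursion for `Y`
along the diagonals, solved by `Y a b = ∑ₜ M (a - 1 - t) (b - t)`; this `Y` is upper triangular
when `M` is strictly upper triangular. Unlike `X` diagonal with distinct entries, this works over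
every field, including finite ones with fewer than `n` elements.
-/

open Matrix

namespace Matrix

section UpperTriangular

variable {m R : Type*} [Fintype m] [LinearOrder m]

theorem IsUpperTriangular.mul_apply_self [NonUnitalNonAssocSemiring R] {A B : Matrix m m R}
    (hA : A.IsUpperTriangular) (hB : B.IsUpperTriangular) (i : m) :
    (A * B) i i = A i i * B i i := by
  rw [mul_apply]
  refine Finset.sum_eq_single i (fun k _ hki => ?_) (by simp)
  rcases hki.lt_or_gt with h | h
  · rw [hA h, zero_mul]
  · rw [hB h, mul_zero]

theorem IsUpperTriangular.commutator_apply_of_le [CommRing R] {A B : Matrix m m R}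
    (hA : A.IsUpperTriangular) (hB : B.IsUpperTriangular) {i j : m} (hji : j ≤ i) :
    (A * B - B * A) i j = 0 := by
  rcases hji.lt_or_eq with h | rfl
  · exact (hA.mul hB).sub (hB.mul hA) h
  · rw [sub_apply, hA.mul_apply_self hB, hB.mul_apply_self hA, mul_comm, sub_self]

end UpperTriangular

section Shift

variable {R : Type*} {n : ℕ}

def upperShift [Zero R] [One R] (n : ℕ) : Matrix (Fin n) (Fin n) R :=
  of fun a b => if (b : ℕ) = a + 1 then 1 else 0

theorem upperShift_isUpperTriangular [Zero R] [One R] :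
    (upperShift n : Matrix (Fin n) (Fin n) R).IsUpperTriangular := by
  intro a b hba
  have : (b : ℕ) < a := hba
  have : (b : ℕ) ≠ a + 1 := by omega
  simp [upperShift, this]

theorem upperShift_mul_of_apply [NonAssocSemiring R] {y : ℕ → ℕ → R}
    (hy : ∀ i j, j < i → y i j = 0) (a b : Fin n) :
    (upperShift n * of fun i j : Fin n => y i j : Matrix (Fin n) (Fin n) R) a b = y (a + 1) b := by
  rw [mul_apply]
  by_cases ha : (a : ℕ) + 1 < n
  · rw [Finset.sum_eq_single ⟨a + 1, ha⟩ (fun k _ hk => ?_) (by simp)]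
    · simp [upperShift]
    · have : (k : ℕ) ≠ a + 1 := fun h => hk (Fin.ext h)
      simp [upperShift, this]
  · rw [hy _ _ (by omega), Finset.sum_eq_zero fun k _ => ?_]
    have : (k : ℕ) ≠ a + 1 := by omega
    simp [upperShift, this]

theorem of_mul_upperShift_apply [NonAssocSemiring R] (y : ℕ → ℕ → R) (a b : Fin n) :
    ((of fun i j : Fin n => y i j) * upperShift n : Matrix (Fin n) (Fin n) R) a b =
      if (b : ℕ) = 0 then 0 else y a (b - 1) := by
  rw [mul_apply]
  split_ifs with hb
  · refine Finset.sum_eq_zero fun k _ => ?_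
    have : (b : ℕ) ≠ k + 1 := by omega
    simp [upperShift, this]
  · rw [Finset.sum_eq_single ⟨b - 1, by omega⟩ (fun k _ hk => ?_) (by simp)]
    · have : (b : ℕ) = b - 1 + 1 := by omega
      simp [upperShift, ← this]
    · have : (b : ℕ) ≠ k + 1 := fun h => hk (Fin.ext (by simp; omega))
      simp [upperShift, this]

end Shift

section DiagonalSum

variable {R : Type*}

/-- `diagPrefixSum m (a + 1) b = m a b + m (a - 1) (b - 1) + ⋯`, stopping at row or column `0`. -/
def diagPrefixSum [Zero R] [Add R] (m : ℕ → ℕ → R) : ℕ → ℕ → R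
  | 0, _ => 0
  | a + 1, 0 => m a 0
  | a + 1, b + 1 => m a (b + 1) + diagPrefixSum m a b

theorem diagPrefixSum_succ [AddZeroClass R] (m : ℕ → ℕ → R) (a b : ℕ) :
    diagPrefixSum m (a + 1) b = m a b + if b = 0 then 0 else diagPrefixSum m a (b - 1) := by
  cases b <;> simp [diagPrefixSum]

theorem diagPrefixSum_eq_zero_of_lt [AddZeroClass R] {m : ℕ → ℕ → R}
    (hm : ∀ i j, j ≤ i → m i j = 0) {a b : ℕ} (hba : b < a) : diagPrefixSum m a b = 0 := by
  induction a generalizing b with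
  | zero => omega
  | succ a ih =>
    cases b with
    | zero => simp [diagPrefixSum, hm]
    | succ b => simp [diagPrefixSum, hm _ _ (by omega : b + 1 ≤ a), ih (by omega : b < a)]

end DiagonalSum

section ExtendByZero

variable {R : Type*} [Zero R] {n : ℕ}

def extendByZero (M : Matrix (Fin n) (Fin n) R) (i j : ℕ) : R :=
  if h : i < n ∧ j < n then M ⟨i, h.1⟩ ⟨j, h.2⟩ else 0

@[simp]
theorem extendByZero_apply (M : Matrix (Fin n) (Fin n) R) (a b : Fin n) :
    extendByZero M a b = M a b := by
  simp [extendByZero]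

theorem extendByZero_eq_zero_of_le {M : Matrix (Fin n) (Fin n) R}
    (hM : ∀ a b : Fin n, b ≤ a → M a b = 0) {i j : ℕ} (hji : j ≤ i) : extendByZero M i j = 0 := by
  unfold extendByZero
  split_ifs
  · exact hM _ _ (Fin.mk_le_mk.mpr hji)
  · rfl

end ExtendByZero

theorem exists_isUpperTriangular_commutator_eq {R : Type*} [Ring R] {n : ℕ}
    {M : Matrix (Fin n) (Fin n) R} (hM : ∀ a b : Fin n, b ≤ a → M a b = 0) :
    ∃ X Y : Matrix (Fin n) (Fin n) R, X.IsUpperTriangular ∧ Y.IsUpperTriangular ∧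
      M = X * Y - Y * X := by
  have hy : ∀ i j, j < i → diagPrefixSum (extendByZero M) i j = 0 := fun _ _ =>
    diagPrefixSum_eq_zero_of_lt fun _ _ => extendByZero_eq_zero_of_le hM
  refine ⟨upperShift n, of fun i j => diagPrefixSum (extendByZero M) i j,
    upperShift_isUpperTriangular, fun i j h => hy _ _ h, ?_⟩
  ext a b
  rw [sub_apply, upperShift_mul_of_apply hy, of_mul_upperShift_apply, diagPrefixSum_succ,
    add_sub_cancel_right, extendByZero_apply]

end Matrix

theorem stmt10_general {K : Type*} [Field K] {n : ℕ} :
    {M : Matrix (Fin n) (Fin n) K | ∃ X Y : Matrix (Fin n) (Fin n) K,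
        (∀ a b : Fin n, b < a → X a b = 0) ∧ (∀ a b : Fin n, b < a → Y a b = 0) ∧
        M = X * Y - Y * X}
      = {M : Matrix (Fin n) (Fin n) K | ∀ a b : Fin n, b ≤ a → M a b = 0} := by
  ext M
  constructor
  · rintro ⟨X, Y, hX, hY, rfl⟩ a b hba
    exact IsUpperTriangular.commutator_apply_of_le (fun i j h => hX i j h)
      (fun i j h => hY i j h) hba
  · exact exists_isUpperTriangular_commutator_eq

/-- The set of commutators `XY - YX` of upper triangular matrices is
exactly the set of strictly upper triangular matrices. -/
theorem stmt10 {K : Type*} [Field K] {n : ℕ} (hn : 2 ≤ n) :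
    {M : Matrix (Fin n) (Fin n) K | ∃ X Y : Matrix (Fin n) (Fin n) K,
        (∀ a b : Fin n, b < a → X a b = 0) ∧ (∀ a b : Fin n, b < a → Y a b = 0) ∧
        M = X * Y - Y * X}
      = {M : Matrix (Fin n) (Fin n) K | ∀ a b : Fin n, b ≤ a → M a b = 0} :=
  stmt10_general
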